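/- Let a_r(α) = 2^{−r}·C(r+1, α) be the cardinal B-spline subdivision mask of degree r, with subdivision operator (S_{a_r}c)(α) = Σ_β a_r(α − 2β)c(β) acting on polynomial sequences. Define ℓ_r(x) = (1/r!)·∏_{j=1}^r (x+j) and p_i = ℓ_r^{(r−i)} (the (r−i)-th derivative). Then S_{a_r} p_i = 2^{−i} p_i for i = 0, …, r, i.e. the polynomials p_i (restricted to ℤ) are eigensequences of the B-spline subdivision operator with eigenvalue 2^{−i}. -/

import Mathlib

open Polynomial

/-- The cardinal B-spline subdivision mask of degree `r`: `a_r(α) = 2^{-r}·C(r+1, α)`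
(zero for `α < 0`; the binomial coefficient vanishes for `α > r+1`). -/
noncomputable def bsplineMask (r : ℕ) (α : ℤ) : ℝ :=
  if 0 ≤ α then ((r + 1).choose α.toNat : ℝ) / 2 ^ r else 0

/-- `ℓ_r(x) = (1/r!)·(x+1)(x+2)⋯(x+r)`. -/
noncomputable def ellr (r : ℕ) : Polynomial ℝ :=
  ((r.factorial : ℝ))⁻¹ • ∏ j ∈ Finset.Icc 1 r, (X + C (j : ℝ))

/-!
Let `T p (x) = ∑ₖ C(r+1,k) p((x-k)/2)` (`dilatedBinomialSum (r+1)`). For a polynomial `p` of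
degree `≤ r` the `(r+1)`-st alternating binomial sum `∑ₖ (-1)^k C(r+1,k) p((α-k)/2)` vanishes,
so the terms with `α - k` even carry exactly half of `T p (α)`; hence the subdivision sum of `p`
at `α` is `2^{-(r+1)} T p (α)`. Since `(T p)' = T p' / 2`, it suffices to show `T ℓ_r = 2 ℓ_r`. Both
sides have degree `≤ r`, and they agree at `0, -1, …, -r`: on the integers of `[-r, 0]` the
polynomial `ℓ_r` vanishes except at `0`, so there the subdivision sum has a single term.
-/

open Finset

theorem Polynomial.alternating_sum_range_choose_mul_eval_eq_zero {R : Type*} [CommRing R]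
    {p : R[X]} {n : ℕ} (hp : p.natDegree < n) (y : R) :
    ∑ k ∈ range (n + 1), (-1) ^ k * n.choose k * p.eval (y + k) = 0 := by
  have h := congr_fun (fwdDiff_iter_eq_zero_of_degree_lt hp) y
  rw [fwdDiff_iter_eq_sum_shift] at h
  calc ∑ k ∈ range (n + 1), (-1) ^ k * n.choose k * p.eval (y + k)
      = (-1) ^ n *
          ∑ k ∈ range (n + 1), ((-1) ^ (n - k) * n.choose k : ℤ) • p.eval (y + k • 1) := by
        rw [mul_sum]
        refine sum_congr rfl fun k hk => ?_
        have hsign : (-1 : R) ^ n * (-1) ^ (n - k) = (-1) ^ k := by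
          rw [← pow_add, neg_one_pow_eq_pow_mod_two, neg_one_pow_eq_pow_mod_two (n := k)]
          congr 1
          have := mem_range.mp hk
          omega
        simp only [← hsign, nsmul_eq_mul, mul_one, zsmul_eq_mul, Int.cast_mul, Int.cast_pow,
          Int.cast_neg, Int.cast_one, Int.cast_natCast]
        ring
    _ = 0 := by rw [h, Pi.zero_apply, mul_zero]

theorem two_mul_sum_filter_two_dvd_sub_eq_sum {R : Type*} [CommRing R] (s : Finset ℕ) (α : ℤ)
    (g : ℕ → R) (h : ∑ k ∈ s, (-1) ^ k * g k = 0) :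
    2 * ∑ k ∈ s with 2 ∣ α - (k : ℕ), g k = ∑ k ∈ s, g k := by
  set σ : R := if 2 ∣ α then 1 else -1
  have hind (k : ℕ) : (if 2 ∣ α - k then 2 else 0 : R) = 1 + σ * (-1) ^ k := by
    rw [neg_one_pow_eq_pow_mod_two]
    rcases Nat.mod_two_eq_zero_or_one k with hk | hk <;> by_cases hα : 2 ∣ α <;>
      simp only [σ, hk, hα] <;> split_ifs <;> first | (exfalso; omega) | norm_num
  calc 2 * ∑ k ∈ s with 2 ∣ α - (k : ℕ), g k = ∑ k ∈ s, (1 + σ * (-1) ^ k) * g k := by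
        simp_rw [mul_sum, sum_filter, ← hind, ite_mul, zero_mul]
    _ = ∑ k ∈ s, g k + σ * ∑ k ∈ s, (-1) ^ k * g k := by
        simp_rw [add_mul, sum_add_distrib, one_mul, mul_sum, mul_assoc]
    _ = ∑ k ∈ s, g k := by rw [h, mul_zero, add_zero]

section DilatedBinomialSum

variable {K : Type*} [Field K]

noncomputable def dilatedBinomialSum (n : ℕ) (p : K[X]) : K[X] :=
  ∑ k ∈ range (n + 1), (n.choose k : K) • p.comp (C 2⁻¹ * (X - C (k : K)))

theorem eval_dilatedBinomialSum (n : ℕ) (p : K[X]) (x : K) :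
    (dilatedBinomialSum n p).eval x
      = ∑ k ∈ range (n + 1), n.choose k * p.eval ((x - k) / 2) := by
  simp [dilatedBinomialSum, eval_finsetSum, eval_comp, div_eq_inv_mul]

theorem natDegree_dilatedBinomialSum_le (n : ℕ) (p : K[X]) :
    (dilatedBinomialSum n p).natDegree ≤ p.natDegree :=
  natDegree_sum_le_of_forall_le _ _ fun k _ => by
    have hlin : (C (2⁻¹ : K) * (X - C (k : K))).natDegree ≤ 1 :=
      (natDegree_C_mul_le _ _).trans (natDegree_X_sub_C_le _)
    exact (natDegree_smul_le _ _).trans <| natDegree_comp_le.trans <|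
      (Nat.mul_le_mul_left _ hlin).trans (mul_one _).le

theorem derivative_dilatedBinomialSum (n : ℕ) (p : K[X]) :
    derivative (dilatedBinomialSum n p) = (2⁻¹ : K) • dilatedBinomialSum n (derivative p) := by
  simp [dilatedBinomialSum, derivative_comp, smul_sum, smul_smul, C_mul', mul_comm]

theorem iterate_derivative_dilatedBinomialSum (n m : ℕ) (p : K[X]) :
    derivative^[m] (dilatedBinomialSum n p)
      = (2⁻¹ : K) ^ m • dilatedBinomialSum n (derivative^[m] p) := by
  induction m with
  | zero => simp
  | succ m ih =>
    rw [Function.iterate_succ_apply', ih, derivative_smul, derivative_dilatedBinomialSum,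
      smul_smul, ← pow_succ, Function.iterate_succ_apply']

end DilatedBinomialSum

theorem bsplineMask_natCast (r k : ℕ) : bsplineMask r k = (r + 1).choose k / 2 ^ r := by
  simp [bsplineMask]

theorem exists_natCast_eq_of_bsplineMask_ne_zero {r : ℕ} {α : ℤ} (h : bsplineMask r α ≠ 0) :
    ∃ k < r + 2, (k : ℤ) = α := by
  unfold bsplineMask at h
  split_ifs at h with hα
  · refine ⟨α.toNat, ?_, Int.toNat_of_nonneg hα⟩
    by_contra hk
    exact h (by rw [Nat.choose_eq_zero_of_lt (by omega), Nat.cast_zero, zero_div])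
  · exact absurd rfl h

theorem finsum_bsplineMask_mul (r : ℕ) (α : ℤ) (f : ℝ → ℝ) :
    ∑ᶠ β : ℤ, bsplineMask r (α - 2 * β) * f β
      = (2 ^ r)⁻¹ *
          ∑ k ∈ range (r + 2) with 2 ∣ α - (k : ℕ), (r + 1).choose k * f ((α - k) / 2) := by
  set s := {k ∈ range (r + 2) | 2 ∣ α - (k : ℕ)}
  have hsupp : (Function.support fun β : ℤ => bsplineMask r (α - 2 * β) * f β)
      ⊆ s.image fun k : ℕ => (α - k) / 2 := by
    intro β hβ
    obtain ⟨k, hk, hkβ⟩ := exists_natCast_eq_of_bsplineMask_ne_zero (left_ne_zero_of_mul hβ)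
    exact mem_image.mpr ⟨k, mem_filter.mpr ⟨mem_range.mpr hk, ⟨β, by omega⟩⟩, by omega⟩
  rw [finsum_eq_sum_of_support_subset _ hsupp, sum_image, mul_sum]
  · refine sum_congr rfl fun k hk => ?_
    obtain ⟨-, hdvd⟩ := mem_filter.mp hk
    have hβ : α - 2 * ((α - k) / 2) = k := by omega
    rw [hβ, bsplineMask_natCast, Int.cast_div hdvd (by norm_num)]
    push_cast
    ring
  · intro k hk l hl hkl
    have := (mem_filter.mp hk).2
    have := (mem_filter.mp hl).2
    simp only at hkl
    omega

theorem finsum_bsplineMask_mul_eval {r : ℕ} {p : ℝ[X]} (hp : p.natDegree ≤ r) (α : ℤ) :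
    ∑ᶠ β : ℤ, bsplineMask r (α - 2 * β) * p.eval (β : ℝ)
      = (2 ^ (r + 1))⁻¹ * (dilatedBinomialSum (r + 1) p).eval (α : ℝ) := by
  set q := p.comp (C 2⁻¹ * (C (α : ℝ) - X))
  have hq : q.natDegree < r + 1 := by
    have hlin : (C (2⁻¹ : ℝ) * (C (α : ℝ) - X)).natDegree ≤ 1 :=
      (natDegree_C_mul_le _ _).trans <| by
        rw [← neg_sub, natDegree_neg]
        exact natDegree_X_sub_C_le _
    exact Nat.lt_succ_of_le <|
      natDegree_comp_le.trans ((Nat.mul_le_mul hp hlin).trans (mul_one r).le)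
  have halt :
      ∑ k ∈ range (r + 2), (-1) ^ k * ((r + 1).choose k * p.eval (((α : ℝ) - k) / 2)) = 0 := by
    simpa [q, eval_comp, mul_assoc, div_eq_inv_mul] using
      alternating_sum_range_choose_mul_eval_eq_zero hq 0
  rw [finsum_bsplineMask_mul r α (eval · p), eval_dilatedBinomialSum,
    show r + 1 + 1 = r + 2 from rfl, ← two_mul_sum_filter_two_dvd_sub_eq_sum _ α _ halt, pow_succ,
    mul_inv, mul_assoc, ← mul_assoc _ 2, inv_mul_cancel₀ two_ne_zero, one_mul]

theorem natDegree_ellr_le (r : ℕ) : (ellr r).natDegree ≤ r :=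
  (natDegree_smul_le _ _).trans <| (natDegree_prod_le _ _).trans <| by
    simpa using sum_le_sum fun j (_ : j ∈ Icc 1 r) => (natDegree_X_add_C (j : ℝ)).le

theorem eval_ellr_intCast {r : ℕ} {z : ℤ} (h₁ : -r ≤ z) (h₂ : z ≤ 0) :
    (ellr r).eval (z : ℝ) = if z = 0 then 1 else 0 := by
  split_ifs with hz
  · have hfact : ∏ j ∈ Icc 1 r, (j : ℝ) = r.factorial := by
      rw [← Nat.cast_prod, ← Ico_add_one_right_eq_Icc, prod_Ico_id_eq_factorial]
    simp [ellr, eval_prod, hz, hfact, r.factorial_ne_zero]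
  · have hroot : (-z).toNat ∈ Icc 1 r := mem_Icc.mpr ⟨by omega, by omega⟩
    rw [ellr, eval_smul, eval_prod, prod_eq_zero hroot (by
      rw [eval_add, eval_X, eval_C, ← Int.cast_natCast, Int.toNat_of_nonneg (by omega),
        Int.cast_neg, add_neg_cancel]), smul_zero]

theorem finsum_bsplineMask_mul_eval_ellr {r : ℕ} {z : ℤ} (h₁ : -r ≤ z) (h₂ : z ≤ 0) :
    ∑ᶠ β : ℤ, bsplineMask r (z - 2 * β) * (ellr r).eval (β : ℝ)
      = (2 ^ r)⁻¹ * (ellr r).eval (z : ℝ) := by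
  rw [finsum_eq_single _ 0 fun β hβ => ?_]
  · rw [mul_zero, sub_zero, Int.cast_zero, ← Int.cast_zero, eval_ellr_intCast (by omega) le_rfl,
      eval_ellr_intCast h₁ h₂]
    by_cases hz : z = 0
    · simp [hz, bsplineMask, div_eq_inv_mul]
    · simp [hz, bsplineMask, lt_of_le_of_ne h₂ hz]
  · by_cases hm : bsplineMask r (z - 2 * β) = 0
    · rw [hm, zero_mul]
    obtain ⟨k, hk, hkz⟩ := exists_natCast_eq_of_bsplineMask_ne_zero hm
    rw [eval_ellr_intCast (by omega) (by omega), if_neg hβ, mul_zero]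

theorem dilatedBinomialSum_ellr (r : ℕ) :
    dilatedBinomialSum (r + 1) (ellr r) = (2 : ℝ) • ellr r := by
  have hdeg (p : ℝ[X]) (hp : p.natDegree ≤ r) : p.degree < #(range (r + 1)) := by
    rw [card_range]
    exact (degree_le_of_natDegree_le hp).trans_lt (by exact_mod_cast Nat.lt_succ_self r)
  refine eq_of_degrees_lt_of_eval_index_eq (v := fun j : ℕ => -(j : ℝ)) (range (r + 1))
    (fun a _ b _ hab => by simpa using hab)
    (hdeg _ ((natDegree_dilatedBinomialSum_le _ _).trans (natDegree_ellr_le r)))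
    (hdeg _ ((natDegree_smul_le _ _).trans (natDegree_ellr_le r))) fun j hj => ?_
  have hj : -(r : ℤ) ≤ -j := by simpa using mem_range.mp hj
  have h := (finsum_bsplineMask_mul_eval (natDegree_ellr_le r) (-j)).symm.trans
    (finsum_bsplineMask_mul_eval_ellr hj (by omega))
  push_cast at h
  rw [eval_smul, smul_eq_mul, ← mul_right_inj' (inv_ne_zero (pow_ne_zero (r + 1) two_ne_zero)),
    h, pow_succ]
  field_simp

theorem dilatedBinomialSum_iterate_derivative_ellr (r m : ℕ) :
    dilatedBinomialSum (r + 1) (derivative^[m] (ellr r))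
      = (2 : ℝ) ^ (m + 1) • derivative^[m] (ellr r) := by
  have h := iterate_derivative_dilatedBinomialSum (r + 1) m (ellr r)
  rw [dilatedBinomialSum_ellr, iterate_derivative_smul] at h
  calc dilatedBinomialSum (r + 1) (derivative^[m] (ellr r))
      = (2 : ℝ) ^ m • (2⁻¹ : ℝ) ^ m • dilatedBinomialSum (r + 1) (derivative^[m] (ellr r)) := by
        rw [smul_smul, ← mul_pow, mul_inv_cancel₀ two_ne_zero, one_pow, one_smul]
    _ = (2 : ℝ) ^ (m + 1) • derivative^[m] (ellr r) := by rw [← h, smul_smul, pow_succ]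

/-- The polynomials `p_i = ℓ_r^{(r-i)}`, restricted to `ℤ`, are eigensequences of the
B-spline subdivision operator: `∑_β a_r(α - 2β) p_i(β) = 2^{-i} p_i(α)` for all `α ∈ ℤ`,
`i = 0, …, r`. -/
theorem bspline_eigen (r i : ℕ) (hi : i ≤ r) (α : ℤ) :
    ∑ᶠ β : ℤ, bsplineMask r (α - 2 * β) * (derivative^[r - i] (ellr r)).eval (β : ℝ)
      = ((2 : ℝ) ^ i)⁻¹ * (derivative^[r - i] (ellr r)).eval (α : ℝ) := by
  have hdeg : (derivative^[r - i] (ellr r)).natDegree ≤ r :=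
    (natDegree_iterate_derivative _ _).trans ((Nat.sub_le _ _).trans (natDegree_ellr_le r))
  rw [finsum_bsplineMask_mul_eval hdeg, dilatedBinomialSum_iterate_derivative_ellr, eval_smul,
    smul_eq_mul, ← mul_assoc]
  congr 1
  obtain ⟨m, rfl⟩ := Nat.exists_eq_add_of_le hi
  rw [Nat.add_sub_cancel_left]
  field_simp
  ring
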